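/- arXiv:1902.03080 — 4 statements merged into one kernel-verified Lean document; each statement's English description precedes it below -/
import Mathlib

section
/- Let γ : [0, s₀] → ℝ² be a C² unit-speed plane curve with tangent T(s) = γ'(s), normal N(s) = T(s)^⊥ (rotation by π/2), and curvature K(s) ≥ 0 with K'(s) ≥ 0 on [0, s₀]. Assume both components of T(s) are positive on (0, s₀). Then for any 0 ≤ s₁ < s₂ ≤ s₀ one has T(s₁)·(γ(s₂) − γ(s₁)) > 0, i.e. the curve lies strictly in the open half-plane to the right of the normal line at γ(s₁). -/
/-- Let γ = (α, β) be a C² unit-speed plane curve on [0, s₀] with curvature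
K = α'β'' − β'α'' satisfying K ≥ 0 and K' ≥ 0 on [0, s₀], and with both
components of the tangent T = (α', β') positive on (0, s₀). Then for any
0 ≤ s₁ < s₂ ≤ s₀, T(s₁)·(γ(s₂) − γ(s₁)) > 0, i.e. the curve lies strictly in
the open half-plane to the right of the normal line at γ(s₁). -/
theorem stmt_6 (s₀ : ℝ) (hs₀ : 0 < s₀) (α β α' β' α'' β'' K' : ℝ → ℝ)
    (hα : ∀ s, HasDerivAt α (α' s) s) (hβ : ∀ s, HasDerivAt β (β' s) s)
    (hα' : ∀ s, HasDerivAt α' (α'' s) s) (hβ' : ∀ s, HasDerivAt β' (β'' s) s)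
    (hunit : ∀ s, α' s ^ 2 + β' s ^ 2 = 1)
    (hK : ∀ s ∈ Set.Icc (0:ℝ) s₀, 0 ≤ α' s * β'' s - β' s * α'' s)
    (hKd : ∀ s, HasDerivAt (fun t => α' t * β'' t - β' t * α'' t) (K' s) s)
    (hK' : ∀ s ∈ Set.Icc (0:ℝ) s₀, 0 ≤ K' s)
    (hT : ∀ s ∈ Set.Ioo (0:ℝ) s₀, 0 < α' s ∧ 0 < β' s) :
    ∀ s₁ s₂ : ℝ, 0 ≤ s₁ → s₁ < s₂ → s₂ ≤ s₀ →
      0 < α' s₁ * (α s₂ - α s₁) + β' s₁ * (β s₂ - β s₁) := by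
  intro s₁ s₂ h1 h12 h2
  have h1' : s₁ < s₀ := lt_of_lt_of_le h12 h2
  have hcα : Continuous α' := continuous_iff_continuousAt.2 fun s => (hα' s).continuousAt
  have hcβ : Continuous β' := continuous_iff_continuousAt.2 fun s => (hβ' s).continuousAt
  -- nonnegativity of the tangent components at s₁
  have hnnα : 0 ≤ α' s₁ := by
    rcases eq_or_lt_of_le h1 with h0 | h0
    · have hmem : Set.Ioo (0:ℝ) s₀ ∈ nhdsWithin (0:ℝ) (Set.Ioi 0) :=
        Ioo_mem_nhdsGT_of_mem ⟨le_refl 0, hs₀⟩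
      have := ge_of_tendsto ((hcα.tendsto 0).mono_left nhdsWithin_le_nhds)
        (Filter.eventually_of_mem hmem fun x hx => (hT x hx).1.le)
      rw [← h0]; exact this
    · exact (hT s₁ ⟨h0, h1'⟩).1.le
  have hnnβ : 0 ≤ β' s₁ := by
    rcases eq_or_lt_of_le h1 with h0 | h0
    · have hmem : Set.Ioo (0:ℝ) s₀ ∈ nhdsWithin (0:ℝ) (Set.Ioi 0) :=
        Ioo_mem_nhdsGT_of_mem ⟨le_refl 0, hs₀⟩
      have := ge_of_tendsto ((hcβ.tendsto 0).mono_left nhdsWithin_le_nhds)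
        (Filter.eventually_of_mem hmem fun x hx => (hT x hx).2.le)
      rw [← h0]; exact this
    · exact (hT s₁ ⟨h0, h1'⟩).2.le
  -- the support function f
  set f : ℝ → ℝ := fun t => α' s₁ * (α t - α s₁) + β' s₁ * (β t - β s₁) with hfdef
  have hf : ∀ s, HasDerivAt f (α' s₁ * α' s + β' s₁ * β' s) s := fun s =>
    (((hα s).sub_const _).const_mul _).add (((hβ s).sub_const _).const_mul _)
  have hmono : StrictMonoOn f (Set.Icc s₁ s₂) := by
    apply StrictMonoOn.mono (s := Set.Icc s₁ s₂) ?_ le_rfl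
    apply strictMonoOn_of_deriv_pos (convex_Icc s₁ s₂)
      (Continuous.continuousOn (continuous_iff_continuousAt.2 fun s => (hf s).continuousAt))
    intro x hx
    rw [interior_Icc] at hx
    rw [(hf x).deriv]
    have hx0 : 0 < x := lt_of_le_of_lt h1 hx.1
    have hxs : x < s₀ := lt_of_lt_of_le hx.2 h2
    obtain ⟨ha, hb⟩ := hT x ⟨hx0, hxs⟩
    have hne : α' s₁ ≠ 0 ∨ β' s₁ ≠ 0 := by
      by_contra h
      push_neg at h
      have := hunit s₁
      rw [h.1, h.2] at this; norm_num at this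
    rcases hne with h | h
    · have : 0 < α' s₁ := lt_of_le_of_ne hnnα (Ne.symm h)
      positivity
    · have : 0 < β' s₁ := lt_of_le_of_ne hnnβ (Ne.symm h)
      positivity
  have := hmono (Set.left_mem_Icc.2 h12.le) ⟨h12.le, le_rfl⟩ h12
  simpa [hfdef] using this
end

section
/- Let γ : [0, s₀] → ℝ² be a C² unit-speed plane curve with T(s) = γ'(s), N(s) = T(s)^⊥, and curvature K(s) ≥ 0 with T(s₁)·T(s) > 0 for all s₁ < s ≤ s₀. Then for each fixed s₁ ∈ [0, s₀] and all s ∈ (s₁, s₀] one has T(s₁)·N(s) ≤ 0. -/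
/-!
Since `N' = -K T` and `K ≥ 0`, the function `u ↦ T(s₁)·N(u)` has derivative
`-K(u) T(s₁)·T(u) ≤ 0` on `(s₁, s₀]`, so it decreases from `T(s₁)·N(s₁) = 0`.
-/

lemma mul_add_mul_eq_zero_of_sq_add_sq_eq_const {a b a' b' : ℝ → ℝ} {c : ℝ}
    (ha : ∀ s, HasDerivAt a (a' s) s) (hb : ∀ s, HasDerivAt b (b' s) s)
    (hab : ∀ s, a s ^ 2 + b s ^ 2 = c) (s : ℝ) :
    a s * a' s + b s * b' s = 0 := by
  have hderiv : HasDerivAt (fun s => a s ^ 2 + b s ^ 2) (2 * (a s * a' s + b s * b' s)) s :=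
    ((ha s).fun_pow 2).fun_add ((hb s).fun_pow 2) |>.congr_deriv (by push_cast; ring)
  have hconst : HasDerivAt (fun s => a s ^ 2 + b s ^ 2) 0 s := by
    simpa only [hab] using hasDerivAt_const s c
  linarith [hderiv.unique hconst]

/-- The Frenet equation `N' = -K T` for a unit tangent `T = (a, b)` with `T' = (a', b')`. -/
lemma frenet_normal {a b a' b' : ℝ} (hunit : a ^ 2 + b ^ 2 = 1) (horth : a * a' + b * b' = 0) :
    -b' = -(a * b' - b * a') * a ∧ a' = -(a * b' - b * a') * b :=
  ⟨by linear_combination b' * hunit - b * horth, by linear_combination a * horth - a' * hunit⟩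

lemma hasDerivAt_dot_normal {α' β' α'' β'' : ℝ → ℝ}
    (hα' : ∀ s, HasDerivAt α' (α'' s) s) (hβ' : ∀ s, HasDerivAt β' (β'' s) s)
    (hunit : ∀ s, α' s ^ 2 + β' s ^ 2 = 1) (p q u : ℝ) :
    HasDerivAt (fun s => p * (-β' s) + q * α' s)
      (-(α' u * β'' u - β' u * α'' u) * (p * α' u + q * β' u)) u := by
  obtain ⟨hN₁, hN₂⟩ := frenet_normal (hunit u)
    (mul_add_mul_eq_zero_of_sq_add_sq_eq_const hα' hβ' hunit u)
  exact ((hβ' u).neg.const_mul p).add ((hα' u).const_mul q) |>.congr_deriv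
    (by linear_combination p * hN₁ + q * hN₂)

theorem stmt_7_general (s₀ : ℝ) (α' β' α'' β'' : ℝ → ℝ)
    (hα' : ∀ s, HasDerivAt α' (α'' s) s) (hβ' : ∀ s, HasDerivAt β' (β'' s) s)
    (hunit : ∀ s, α' s ^ 2 + β' s ^ 2 = 1)
    (hK : ∀ s ∈ Set.Icc (0:ℝ) s₀, 0 ≤ α' s * β'' s - β' s * α'' s)
    (s₁ : ℝ) (hs₁ : s₁ ∈ Set.Icc (0:ℝ) s₀)
    (hTT : ∀ s : ℝ, s₁ < s → s ≤ s₀ → 0 < α' s₁ * α' s + β' s₁ * β' s) :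
    ∀ s : ℝ, s₁ < s → s ≤ s₀ →
      α' s₁ * (-β' s) + β' s₁ * α' s ≤ 0 := by
  intro s hs₁s hss₀
  have hderiv := hasDerivAt_dot_normal hα' hβ' hunit (α' s₁) (β' s₁)
  have hanti : AntitoneOn (fun u => α' s₁ * (-β' u) + β' s₁ * α' u) (Set.Icc s₁ s) := by
    refine antitoneOn_of_hasDerivWithinAt_nonpos (convex_Icc s₁ s)
      (fun u _ => (hderiv u).continuousAt.continuousWithinAt)
      (fun u _ => (hderiv u).hasDerivWithinAt) fun u hu => ?_
    rw [interior_Icc] at hu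
    have hus₀ : u ≤ s₀ := hu.2.le.trans hss₀
    rw [neg_mul, neg_nonpos]
    exact mul_nonneg (hK u ⟨hs₁.1.trans hu.1.le, hus₀⟩) (hTT u hu.1 hus₀).le
  calc α' s₁ * (-β' s) + β' s₁ * α' s
      ≤ α' s₁ * (-β' s₁) + β' s₁ * α' s₁ :=
        hanti ⟨le_rfl, hs₁s.le⟩ ⟨hs₁s.le, le_rfl⟩ hs₁s.le
    _ = 0 := by ring

/-- Let γ = (α, β) be a C² unit-speed plane curve on [0, s₀] with curvature
K = α'β'' − β'α'' ≥ 0 on [0, s₀], and let s₁ ∈ [0, s₀] be such that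
T(s₁)·T(s) > 0 for all s ∈ (s₁, s₀]. Then T(s₁)·N(s) ≤ 0 for all
s ∈ (s₁, s₀], where T = (α', β') and N = (−β', α'). -/
theorem stmt_7 (s₀ : ℝ) (hs₀ : 0 < s₀) (α β α' β' α'' β'' : ℝ → ℝ)
    (hα : ∀ s, HasDerivAt α (α' s) s) (hβ : ∀ s, HasDerivAt β (β' s) s)
    (hα' : ∀ s, HasDerivAt α' (α'' s) s) (hβ' : ∀ s, HasDerivAt β' (β'' s) s)
    (hunit : ∀ s, α' s ^ 2 + β' s ^ 2 = 1)
    (hK : ∀ s ∈ Set.Icc (0:ℝ) s₀, 0 ≤ α' s * β'' s - β' s * α'' s)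
    (s₁ : ℝ) (hs₁ : s₁ ∈ Set.Icc (0:ℝ) s₀)
    (hTT : ∀ s : ℝ, s₁ < s → s ≤ s₀ → 0 < α' s₁ * α' s + β' s₁ * β' s) :
    ∀ s : ℝ, s₁ < s → s ≤ s₀ →
      α' s₁ * (-β' s) + β' s₁ * α' s ≤ 0 :=
  stmt_7_general s₀ α' β' α'' β'' hα' hβ' hunit hK s₁ hs₁ hTT
end

section
/- Let γ : [0, s₀] → ℝ² be a C² unit-speed plane curve with curvature K(s) ≥ 0, K nonincreasing radius of curvature (K'(s) ≥ 0), and T(s) = γ'(s) having positive components on (0, s₀). Let R(s) = 1/K(s) ∈ (0, ∞], N = T^⊥, and define for each s the half-open segment Σ(s) = [γ(s), γ(s) + R(s)N(s)). Then for any 0 ≤ s₁ < s₂ ≤ s₀, the segments Σ(s₁) and Σ(s₂) are disjoint; consequently the map M(r,s) = γ(s) + rN(s) is injective on Q = {(r,s) : 0 ≤ r < R(s), 0 ≤ s ≤ s₀}. -/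
/-!
Suppose the normals at `s₁ < s₂` meet at `P = γ(s₁) + r₁ N(s₁) = γ(s₂) + r₂ N(s₂)` and put
`k = K(s₂)`. The vector `V = k (P - γ) - N` satisfies `V' = (K - k) T`, where `K ≤ k` on
`[s₁, s₂]` and `T` stays in the first quadrant, turning counterclockwise up to `T(s₂)`.
Since `V(s₂) = (k r₂ - 1) N(s₂)` and `V(s₁) = (k r₁ - 1) N(s₁)`, pairing with `T(s₂)` gives
`(k r₁ - 1) (T(s₁) × T(s₂)) ≥ 0`, and the cross product is positive because `γ(s₂)` lies strictly
north-east of `γ(s₁)`; hence `k r₁ ≥ 1`. Pairing with `N(s₂)` then gives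
`k r₂ - 1 ≥ (k r₁ - 1) ⟨T(s₁), T(s₂)⟩ ≥ 0`, so `P ∉ Σ(s₂)`.
-/

/-- The signed curvature K = α'β'' − β'α'' of a unit-speed plane curve. -/
noncomputable def curv9 (α' β' α'' β'' : ℝ → ℝ) (s : ℝ) : ℝ :=
  α' s * β'' s - β' s * α'' s

/-- The half-open normal segment Σ(s) = [γ(s), γ(s) + R(s)N(s)), with
R = 1/K (R = ∞ when K = 0): its points are γ(s) + rN(s) with 0 ≤ r and
r·K(s) < 1. -/
noncomputable def seg9 (α β α' β' α'' β'' : ℝ → ℝ) (s : ℝ) : Set (ℝ × ℝ) :=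
  {P | ∃ r : ℝ, 0 ≤ r ∧ r * curv9 α' β' α'' β'' s < 1 ∧
    P = (α s + r * (-β' s), β s + r * α' s)}

open Set

theorem monotoneOn_Icc_of_hasDerivAt_nonneg {f f' : ℝ → ℝ} {a b : ℝ}
    (hf : ∀ x, HasDerivAt f (f' x) x) (hf' : ∀ x ∈ Ioo a b, 0 ≤ f' x) :
    MonotoneOn f (Icc a b) :=
  monotoneOn_of_hasDerivWithinAt_nonneg (convex_Icc a b)
    (fun x _ => (hf x).continuousAt.continuousWithinAt) (fun x _ => (hf x).hasDerivWithinAt)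
    (by rwa [interior_Icc])

theorem strictMonoOn_Icc_of_hasDerivAt_pos {f f' : ℝ → ℝ} {a b : ℝ}
    (hf : ∀ x, HasDerivAt f (f' x) x) (hf' : ∀ x ∈ Ioo a b, 0 < f' x) :
    StrictMonoOn f (Icc a b) :=
  strictMonoOn_of_hasDerivWithinAt_pos (convex_Icc a b)
    (fun x _ => (hf x).continuousAt.continuousWithinAt) (fun x _ => (hf x).hasDerivWithinAt)
    (by rwa [interior_Icc])

theorem nonneg_on_Icc_of_pos_on_Ioo {f : ℝ → ℝ} (hf : Continuous f) {a b : ℝ} (hab : a < b)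
    (h : ∀ x ∈ Ioo a b, 0 < f x) : ∀ x ∈ Icc a b, 0 ≤ f x := fun _ hx =>
  closure_minimal (fun y hy => (h y hy).le) (isClosed_le continuous_const hf)
    (by rwa [closure_Ioo hab.ne])

/-- Rays from `(x₁, y₁)` and `(x₂, y₂)` in the directions `(-b₁, a₁)` and `(-b₂, a₂)` can only
meet, with the second point strictly north-east of the first, if the second direction lies
counterclockwise from the first. -/
theorem cross_pos_of_normals_meet {x₁ y₁ x₂ y₂ a₁ b₁ a₂ b₂ r₁ r₂ : ℝ} (hr₁ : 0 ≤ r₁)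
    (hr₂ : 0 ≤ r₂) (hb₁ : 0 ≤ b₁) (ha₂ : 0 ≤ a₂) (hx : x₁ < x₂) (hy : y₁ < y₂)
    (eA : x₁ + r₁ * -b₁ = x₂ + r₂ * -b₂) (eB : y₁ + r₁ * a₁ = y₂ + r₂ * a₂) :
    0 < a₁ * b₂ - b₁ * a₂ := by
  have hb : r₁ * b₁ < r₂ * b₂ := by linarith
  have ha : r₂ * a₂ < r₁ * a₁ := by linarith
  have hprod := mul_lt_mul'' hb ha (mul_nonneg hr₁ hb₁) (mul_nonneg hr₂ ha₂)
  by_contra! hle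
  nlinarith [mul_nonneg hr₁ hr₂]

section UnitSpeed

variable {α β α' β' α'' β'' : ℝ → ℝ}

local notation "K" => curv9 α' β' α'' β''

theorem tangent_dot_deriv_eq_zero (hα' : ∀ s, HasDerivAt α' (α'' s) s)
    (hβ' : ∀ s, HasDerivAt β' (β'' s) s) (hunit : ∀ s, α' s ^ 2 + β' s ^ 2 = 1) (s : ℝ) :
    α' s * α'' s + β' s * β'' s = 0 := by
  have hsq : HasDerivAt (fun s => α' s ^ 2 + β' s ^ 2)
      (2 * α' s * α'' s + 2 * β' s * β'' s) s :=
    (((hα' s).fun_pow 2).add ((hβ' s).fun_pow 2)).congr_deriv (by ring)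
  have hconst : HasDerivAt (fun s => α' s ^ 2 + β' s ^ 2) 0 s := by
    simpa only [hunit] using hasDerivAt_const s (1 : ℝ)
  linarith [hsq.unique hconst]

theorem frenet_fst (hα' : ∀ s, HasDerivAt α' (α'' s) s) (hβ' : ∀ s, HasDerivAt β' (β'' s) s)
    (hunit : ∀ s, α' s ^ 2 + β' s ^ 2 = 1) (s : ℝ) : α'' s = -(K s * β' s) := by
  unfold curv9
  linear_combination α' s * tangent_dot_deriv_eq_zero hα' hβ' hunit s - α'' s * hunit s

theorem frenet_snd (hα' : ∀ s, HasDerivAt α' (α'' s) s) (hβ' : ∀ s, HasDerivAt β' (β'' s) s)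
    (hunit : ∀ s, α' s ^ 2 + β' s ^ 2 = 1) (s : ℝ) : β'' s = K s * α' s := by
  unfold curv9
  linear_combination β' s * tangent_dot_deriv_eq_zero hα' hβ' hunit s - β'' s * hunit s

theorem hasDerivAt_tangent_dot (hα' : ∀ s, HasDerivAt α' (α'' s) s)
    (hβ' : ∀ s, HasDerivAt β' (β'' s) s) (hunit : ∀ s, α' s ^ 2 + β' s ^ 2 = 1)
    (a b s : ℝ) :
    HasDerivAt (fun τ => α' τ * a + β' τ * b) (K s * (-β' s * a + α' s * b)) s := by
  refine (((hα' s).mul_const a).add ((hβ' s).mul_const b)).congr_deriv ?_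
  rw [frenet_fst hα' hβ' hunit, frenet_snd hα' hβ' hunit]
  ring

/-- `k (P - γ) - N` has derivative `(K - k) T`; it vanishes identically on a circle of
curvature `k` centred at `P`. -/
theorem hasDerivAt_focal_dot (hα : ∀ s, HasDerivAt α (α' s) s)
    (hβ : ∀ s, HasDerivAt β (β' s) s) (hα' : ∀ s, HasDerivAt α' (α'' s) s)
    (hβ' : ∀ s, HasDerivAt β' (β'' s) s) (hunit : ∀ s, α' s ^ 2 + β' s ^ 2 = 1)
    (k p q a b s : ℝ) :
    HasDerivAt (fun τ => (k * (p - α τ) + β' τ) * a + (k * (q - β τ) - α' τ) * b)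
      ((K s - k) * (α' s * a + β' s * b)) s := by
  have hx := (((hasDerivAt_const s p).sub (hα s)).const_mul k).add (hβ' s)
  have hy := (((hasDerivAt_const s q).sub (hβ s)).const_mul k).sub (hα' s)
  refine ((hx.mul_const a).add (hy.mul_const b)).congr_deriv ?_
  rw [frenet_fst hα' hβ' hunit, frenet_snd hα' hβ' hunit]
  ring

theorem tangent_dot_normal_nonpos (hα' : ∀ s, HasDerivAt α' (α'' s) s)
    (hβ' : ∀ s, HasDerivAt β' (β'' s) s) (hunit : ∀ s, α' s ^ 2 + β' s ^ 2 = 1) {s₁ s₂ τ : ℝ}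
    (hK : ∀ τ ∈ Icc s₁ s₂, 0 ≤ K τ)
    (hTT : ∀ τ ∈ Icc s₁ s₂, 0 ≤ α' τ * α' s₂ + β' τ * β' s₂) (hτ : τ ∈ Icc s₁ s₂) :
    α' τ * -β' s₂ + β' τ * α' s₂ ≤ 0 := by
  have hmono := monotoneOn_Icc_of_hasDerivAt_nonneg
    (hasDerivAt_tangent_dot hα' hβ' hunit (-β' s₂) (α' s₂)) fun x hx =>
      mul_nonneg (hK x (Ioo_subset_Icc_self hx)) (by linarith [hTT x (Ioo_subset_Icc_self hx)])
  have := hmono hτ (right_mem_Icc.2 (hτ.1.trans hτ.2)) hτ.2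
  simp only at this
  linarith

theorem one_le_mul_curv_of_normals_meet (hα : ∀ s, HasDerivAt α (α' s) s)
    (hβ : ∀ s, HasDerivAt β (β' s) s) (hα' : ∀ s, HasDerivAt α' (α'' s) s)
    (hβ' : ∀ s, HasDerivAt β' (β'' s) s) (hunit : ∀ s, α' s ^ 2 + β' s ^ 2 = 1)
    {s₁ s₂ r₁ r₂ : ℝ} (h12 : s₁ < s₂) (hK : ∀ τ ∈ Icc s₁ s₂, 0 ≤ K τ)
    (hKmono : MonotoneOn K (Icc s₁ s₂)) (hT : ∀ τ ∈ Ioo s₁ s₂, 0 < α' τ ∧ 0 < β' τ)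
    (hr₁ : 0 ≤ r₁) (hr₂ : 0 ≤ r₂) (eA : α s₁ + r₁ * -β' s₁ = α s₂ + r₂ * -β' s₂)
    (eB : β s₁ + r₁ * α' s₁ = β s₂ + r₂ * α' s₂) :
    1 ≤ r₂ * K s₂ := by
  have hs₁ : s₁ ∈ Icc s₁ s₂ := left_mem_Icc.2 h12.le
  have hs₂ : s₂ ∈ Icc s₁ s₂ := right_mem_Icc.2 h12.le
  have hα'nn := nonneg_on_Icc_of_pos_on_Ioo (continuous_iff_continuousAt.2 fun s =>
    (hα' s).continuousAt) h12 fun τ hτ => (hT τ hτ).1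
  have hβ'nn := nonneg_on_Icc_of_pos_on_Ioo (continuous_iff_continuousAt.2 fun s =>
    (hβ' s).continuousAt) h12 fun τ hτ => (hT τ hτ).2
  have hαlt := strictMonoOn_Icc_of_hasDerivAt_pos hα (fun τ hτ => (hT τ hτ).1) hs₁ hs₂ h12
  have hβlt := strictMonoOn_Icc_of_hasDerivAt_pos hβ (fun τ hτ => (hT τ hτ).2) hs₁ hs₂ h12
  have hcross : 0 < α' s₁ * β' s₂ - β' s₁ * α' s₂ :=
    cross_pos_of_normals_meet hr₁ hr₂ (hβ'nn _ hs₁) (hα'nn _ hs₂) hαlt hβlt eA eB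
  have hTT : ∀ τ ∈ Icc s₁ s₂, 0 ≤ α' τ * α' s₂ + β' τ * β' s₂ := fun τ hτ =>
    add_nonneg (mul_nonneg (hα'nn τ hτ) (hα'nn _ hs₂)) (mul_nonneg (hβ'nn τ hτ) (hβ'nn _ hs₂))
  set k := K s₂
  have hr₁k : 1 ≤ r₁ * k := by
    have hpairT := monotoneOn_Icc_of_hasDerivAt_nonneg
      (hasDerivAt_focal_dot hα hβ hα' hβ' hunit k (α s₁ + r₁ * -β' s₁) (β s₁ + r₁ * α' s₁)
        (-α' s₂) (-β' s₂)) (fun x hx => by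
          have hx' := Ioo_subset_Icc_self hx
          nlinarith [hKmono hx' hs₂ hx'.2, hTT x hx']) hs₁ hs₂ h12.le
    have hval : (1 - r₁ * k) * (α' s₁ * β' s₂ - β' s₁ * α' s₂) ≤ 0 := by
      linear_combination hpairT - k * α' s₂ * eA - k * β' s₂ * eB
    nlinarith
  have hpairN := monotoneOn_Icc_of_hasDerivAt_nonneg
    (hasDerivAt_focal_dot hα hβ hα' hβ' hunit k (α s₁ + r₁ * -β' s₁) (β s₁ + r₁ * α' s₁)
      (-β' s₂) (α' s₂)) (fun x hx => by
        have hx' := Ioo_subset_Icc_self hx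
        exact mul_nonneg_of_nonpos_of_nonpos (sub_nonpos.2 (hKmono hx' hs₂ hx'.2))
          (tangent_dot_normal_nonpos hα' hβ' hunit hK hTT hx')) hs₁ hs₂ h12.le
  have hval : (r₁ * k - 1) * (α' s₁ * α' s₂ + β' s₁ * β' s₂) ≤ r₂ * k - 1 := by
    linear_combination hpairN - k * β' s₂ * eA + k * α' s₂ * eB + (r₂ * k - 1) * hunit s₂
  nlinarith [mul_nonneg (sub_nonneg.2 hr₁k) (hTT s₁ hs₁)]

end UnitSpeed

theorem stmt_9_general (s₀ : ℝ) (α β α' β' α'' β'' K' : ℝ → ℝ)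
    (hα : ∀ s, HasDerivAt α (α' s) s) (hβ : ∀ s, HasDerivAt β (β' s) s)
    (hα' : ∀ s, HasDerivAt α' (α'' s) s) (hβ' : ∀ s, HasDerivAt β' (β'' s) s)
    (hunit : ∀ s, α' s ^ 2 + β' s ^ 2 = 1)
    (hK : ∀ s ∈ Set.Icc (0:ℝ) s₀, 0 ≤ curv9 α' β' α'' β'' s)
    (hKd : ∀ s, HasDerivAt (curv9 α' β' α'' β'') (K' s) s)
    (hK' : ∀ s ∈ Set.Icc (0:ℝ) s₀, 0 ≤ K' s)
    (hT : ∀ s ∈ Set.Ioo (0:ℝ) s₀, 0 < α' s ∧ 0 < β' s) :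
    (∀ s₁ s₂ : ℝ, 0 ≤ s₁ → s₁ < s₂ → s₂ ≤ s₀ →
      Disjoint (seg9 α β α' β' α'' β'' s₁) (seg9 α β α' β' α'' β'' s₂)) ∧
    Set.InjOn (fun p : ℝ × ℝ => ((α p.2 + p.1 * (-β' p.2), β p.2 + p.1 * α' p.2) : ℝ × ℝ))
      {p : ℝ × ℝ | 0 ≤ p.1 ∧ p.1 * curv9 α' β' α'' β'' p.2 < 1 ∧
        0 ≤ p.2 ∧ p.2 ≤ s₀} := by
  have hKmono := monotoneOn_Icc_of_hasDerivAt_nonneg hKd fun s hs => hK' s (Ioo_subset_Icc_self hs)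
  have hnot_meet : ∀ s₁ s₂ r₁ r₂, 0 ≤ s₁ → s₁ < s₂ → s₂ ≤ s₀ → 0 ≤ r₁ → 0 ≤ r₂ →
      r₂ * curv9 α' β' α'' β'' s₂ < 1 → α s₁ + r₁ * -β' s₁ = α s₂ + r₂ * -β' s₂ →
      β s₁ + r₁ * α' s₁ ≠ β s₂ + r₂ * α' s₂ := by
    intro s₁ s₂ r₁ r₂ hs₁ h12 hs₂ hr₁ hr₂ hr₂K eA eB
    have hsub : Icc s₁ s₂ ⊆ Icc 0 s₀ := Icc_subset_Icc hs₁ hs₂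
    exact (one_le_mul_curv_of_normals_meet hα hβ hα' hβ' hunit h12 (fun s hs => hK s (hsub hs))
      (hKmono.mono hsub) (fun s hs => hT s (Ioo_subset_Ioo hs₁ hs₂ hs)) hr₁ hr₂ eA eB).not_gt hr₂K
  refine ⟨fun s₁ s₂ hs₁ h12 hs₂ => disjoint_left.2 ?_, ?_⟩
  · rintro _ ⟨r₁, hr₁, -, rfl⟩ ⟨r₂, hr₂, hr₂K, hP⟩
    obtain ⟨eA, eB⟩ := Prod.mk.inj hP
    exact hnot_meet s₁ s₂ r₁ r₂ hs₁ h12 hs₂ hr₁ hr₂ hr₂K eA eB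
  rintro ⟨r₁, s₁⟩ ⟨hr₁, hr₁K, hs₁, hs₁₀⟩ ⟨r₂, s₂⟩ ⟨hr₂, hr₂K, hs₂, hs₂₀⟩ hP
  obtain ⟨eA, eB⟩ := Prod.mk.inj hP
  rcases lt_trichotomy s₁ s₂ with h12 | rfl | h21
  · exact (hnot_meet s₁ s₂ r₁ r₂ hs₁ h12 hs₂₀ hr₁ hr₂ hr₂K eA eB).elim
  · have hsq : (r₁ - r₂) ^ 2 = 0 := by
      linear_combination -(r₁ - r₂) * β' s₁ * eA + (r₁ - r₂) * α' s₁ * eB - (r₁ - r₂) ^ 2 * hunit s₁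
    rw [sub_eq_zero.1 (pow_eq_zero_iff two_ne_zero |>.1 hsq)]
  · exact (hnot_meet s₂ s₁ r₂ r₁ hs₂ h21 hs₁₀ hr₂ hr₁ hr₁K eA.symm eB.symm).elim

/-- Let γ = (α, β) be a C² unit-speed plane curve on [0, s₀] with curvature
K ≥ 0, K' ≥ 0 on [0, s₀] and tangent components positive on (0, s₀). Then for
0 ≤ s₁ < s₂ ≤ s₀ the normal segments Σ(s₁) and Σ(s₂) are disjoint;
consequently M(r,s) = γ(s) + rN(s) is injective on
Q = {(r,s) : 0 ≤ r, r·K(s) < 1, 0 ≤ s ≤ s₀}. -/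
theorem stmt_9 (s₀ : ℝ) (hs₀ : 0 < s₀) (α β α' β' α'' β'' K' : ℝ → ℝ)
    (hα : ∀ s, HasDerivAt α (α' s) s) (hβ : ∀ s, HasDerivAt β (β' s) s)
    (hα' : ∀ s, HasDerivAt α' (α'' s) s) (hβ' : ∀ s, HasDerivAt β' (β'' s) s)
    (hunit : ∀ s, α' s ^ 2 + β' s ^ 2 = 1)
    (hK : ∀ s ∈ Set.Icc (0:ℝ) s₀, 0 ≤ curv9 α' β' α'' β'' s)
    (hKd : ∀ s, HasDerivAt (curv9 α' β' α'' β'') (K' s) s)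
    (hK' : ∀ s ∈ Set.Icc (0:ℝ) s₀, 0 ≤ K' s)
    (hT : ∀ s ∈ Set.Ioo (0:ℝ) s₀, 0 < α' s ∧ 0 < β' s) :
    (∀ s₁ s₂ : ℝ, 0 ≤ s₁ → s₁ < s₂ → s₂ ≤ s₀ →
      Disjoint (seg9 α β α' β' α'' β'' s₁) (seg9 α β α' β' α'' β'' s₂)) ∧
    Set.InjOn (fun p : ℝ × ℝ => ((α p.2 + p.1 * (-β' p.2), β p.2 + p.1 * α' p.2) : ℝ × ℝ))
      {p : ℝ × ℝ | 0 ≤ p.1 ∧ p.1 * curv9 α' β' α'' β'' p.2 < 1 ∧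
        0 ≤ p.2 ∧ p.2 ≤ s₀} :=
  stmt_9_general s₀ α β α' β' α'' β'' K' hα hβ hα' hβ' hunit hK hKd hK' hT
end

section
/- Let γ(s) = (α(s), β(s)) be a C² unit-speed plane curve with γ(0) = (0,0), γ'(0) = (1,0), and normal N = (−β', α'). Suppose |γ'(s) − e₁| ≤ C₃ s and |γ(s) − s e₁| ≤ C₃ s² for s ∈ [0, s̄] with some constant C₃ > 0. Then for every r ≥ 0 and every ε > 0 and s ∈ (0, s̄] satisfying 1 − C₃ε − 2C₃s − C₃²s² ≥ 0, one has γ'(s) · (γ(s) + rN(s) − ε e₂) ≥ s(1 − C₃ε − 2C₃s − C₃²s²) ≥ 0, where e₁ = (1,0), e₂ = (0,1). -/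
set_option maxHeartbeats 1000000


/-- Let γ = (α, β) be a C¹ unit-speed plane curve on [0, s̄] with γ(0) = (0,0),
γ'(0) = e₁ = (1,0), normal N = (−β', α'), satisfying the Taylor-type bounds
|γ'(s) − e₁| ≤ C₃ s and |γ(s) − s e₁| ≤ C₃ s² (Euclidean norms). Then for all
r ≥ 0, ε > 0 and s ∈ (0, s̄] with 1 − C₃ε − 2C₃s − C₃²s² ≥ 0,
γ'(s)·(γ(s) + rN(s) − ε e₂) ≥ s(1 − C₃ε − 2C₃s − C₃²s²) ≥ 0. -/
theorem stmt_18 (sb C₃ : ℝ) (hsb : 0 < sb) (hC₃ : 0 < C₃)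
    (α β α' β' : ℝ → ℝ)
    (hα : ∀ s, HasDerivAt α (α' s) s) (hβ : ∀ s, HasDerivAt β (β' s) s)
    (hunit : ∀ s, α' s ^ 2 + β' s ^ 2 = 1)
    (h0 : α 0 = 0 ∧ β 0 = 0) (h0' : α' 0 = 1 ∧ β' 0 = 0)
    (hT : ∀ s ∈ Set.Icc (0:ℝ) sb,
      Real.sqrt ((α' s - 1) ^ 2 + (β' s) ^ 2) ≤ C₃ * s)
    (hG : ∀ s ∈ Set.Icc (0:ℝ) sb,
      Real.sqrt ((α s - s) ^ 2 + (β s) ^ 2) ≤ C₃ * s ^ 2) :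
    ∀ r ε s : ℝ, 0 ≤ r → 0 < ε → 0 < s → s ≤ sb →
      0 ≤ 1 - C₃ * ε - 2 * C₃ * s - C₃ ^ 2 * s ^ 2 →
      s * (1 - C₃ * ε - 2 * C₃ * s - C₃ ^ 2 * s ^ 2) ≤
        α' s * (α s + r * (-β' s)) + β' s * (β s + r * α' s - ε) ∧
      0 ≤ α' s * (α s + r * (-β' s)) + β' s * (β s + r * α' s - ε) := by
  intro r ε s hr hε hs hssb hfac
  have hmem : s ∈ Set.Icc (0:ℝ) sb := ⟨hs.le, hssb⟩
  have hT' := hT s hmem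
  have hG' := hG s hmem
  -- square the sqrt bounds
  have hu : (α' s - 1) ^ 2 + (β' s) ^ 2 ≤ (C₃ * s) ^ 2 := by
    have h1 : (0:ℝ) ≤ (α' s - 1) ^ 2 + (β' s) ^ 2 := by positivity
    nlinarith [Real.sq_sqrt h1, Real.sqrt_nonneg ((α' s - 1) ^ 2 + (β' s) ^ 2)]
  have hv : (α s - s) ^ 2 + (β s) ^ 2 ≤ (C₃ * s ^ 2) ^ 2 := by
    have h1 : (0:ℝ) ≤ (α s - s) ^ 2 + (β s) ^ 2 := by positivity
    nlinarith [Real.sq_sqrt h1, Real.sqrt_nonneg ((α s - s) ^ 2 + (β s) ^ 2)]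
  set u1 := α' s - 1
  set u2 := β' s
  set v1 := α s - s
  set v2 := β s
  -- Cauchy-Schwarz: (u1 v1 + u2 v2)^2 ≤ (u1^2+u2^2)(v1^2+v2^2)
  have hw : u1 * v1 + u2 * v2 ≥ -(C₃ ^ 2 * s ^ 3) := by
    nlinarith [sq_nonneg (u1 * v2 - u2 * v1), sq_nonneg (u1 * v1 + u2 * v2 + C₃ ^ 2 * s ^ 3),
      mul_pos hC₃ hs, sq_nonneg u1, sq_nonneg v1, sq_nonneg u2, sq_nonneg v2,
      mul_pos (mul_pos hC₃ hs) (mul_pos hC₃ (mul_pos hs hs))]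
  have hcs : 0 ≤ C₃ * s := (mul_pos hC₃ hs).le
  have hcs2 : 0 ≤ C₃ * s ^ 2 := by positivity
  have hu1 : -(C₃ * s) ≤ u1 :=
    (abs_le_of_sq_le_sq' (by nlinarith [sq_nonneg u2]) hcs).1
  have hu2 : u2 ≤ C₃ * s :=
    (abs_le_of_sq_le_sq' (by nlinarith [sq_nonneg u1]) hcs).2
  have hv1 : -(C₃ * s ^ 2) ≤ v1 :=
    (abs_le_of_sq_le_sq' (by nlinarith [sq_nonneg v2]) hcs2).1
  have key : s * (1 - C₃ * ε - 2 * C₃ * s - C₃ ^ 2 * s ^ 2) ≤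
      α' s * (α s + r * (-β' s)) + β' s * (β s + r * α' s - ε) := by
    have expand : α' s * (α s + r * (-β' s)) + β' s * (β s + r * α' s - ε)
        = s + v1 + s * u1 + (u1 * v1 + u2 * v2) - ε * u2 := by
      simp only [u1, u2, v1, v2]; ring
    rw [expand]
    nlinarith [mul_le_mul_of_nonneg_left hu2 hε.le]
  exact ⟨key, le_trans (mul_nonneg hs.le hfac) key⟩
end
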